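/- Let d = Σ_{α∈S} φ^{v^α}(u_α + (f,u_α) + Φ_{[u_α]}) + (1/2)Σ_{α,β∈S} φ^{v^α}φ^{v^β}φ_{[u_β,u_α]} ∈ S(R_k^{cp}(g,f)), where {u_α}_{α∈S} and {v^α}_{α∈S} are dual bases of n and n*. Then {d_λ d} = 0, and consequently the odd operator d_{(0)} := {d_λ ·}|_{λ=0} satisfies d_{(0)} ∘ d_{(0)} = 0; that is, d_{(0)} is a differential on the complex S(R_k^{cp}(g,f)). -/

import Mathlib

open Polynomial

noncomputable section

namespace Stmt0

/-- the sign `(−1)^{p(a)p(b)}` for parities `i, j ∈ ℤ/2ℤ`. -/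
def superSign (i j : ZMod 2) : ℤ := if i = 1 ∧ j = 1 then -1 else 1

def coeffMap {V : Type*} [Ring V] (D : V → V) (p : Polynomial V) : Polynomial V :=
  p.sum fun n c => Polynomial.C (D c) * Polynomial.X ^ n

def shiftOp {V : Type*} [Ring V] (D : V → V) (q : Polynomial V) : Polynomial V :=
  Polynomial.X * q + coeffMap D q

def negShiftEval {V : Type*} [Ring V] (D : V → V) (p : Polynomial V) : Polynomial V :=
  p.sum fun n c => (fun q => -shiftOp D q)^[n] (Polynomial.C c)

def lamPP {V : Type*} [Ring V] : Polynomial (Polynomial V) := Polynomial.C Polynomial.X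
def muPP {V : Type*} [Ring V] : Polynomial (Polynomial V) := Polynomial.X
def embPP {V : Type*} [Ring V] (c : V) : Polynomial (Polynomial V) :=
  Polynomial.C (Polynomial.C c)
def evalAtPP {V : Type*} [Ring V] (q : Polynomial V) (t : Polynomial (Polynomial V)) :
    Polynomial (Polynomial V) :=
  q.sum fun n c => embPP c * t ^ n

/-- Poisson vertex superalgebra axioms for a ℤ/2ℤ-graded unital differential algebra
`(V, 𝒜, D)` with λ-bracket `br`; `V[λ,μ]` is modelled as `Polynomial (Polynomial V)`
with `μ` outer and `λ` inner. -/
structure IsSuperPVA {V : Type*} [Ring V] [Algebra ℂ V] (𝒜 : ZMod 2 → Submodule ℂ V)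
    (D : V → V) (br : V → V → Polynomial V) : Prop where
  d_add : ∀ a b, D (a + b) = D a + D b
  d_smul : ∀ (r : ℂ) a, D (r • a) = r • D a
  d_mul : ∀ a b, D (a * b) = a * D b + D a * b
  one_mem : (1 : V) ∈ 𝒜 0
  mul_mem : ∀ i j, ∀ a ∈ 𝒜 i, ∀ b ∈ 𝒜 j, a * b ∈ 𝒜 (i + j)
  d_mem : ∀ i, ∀ a ∈ 𝒜 i, D a ∈ 𝒜 i
  total : ∀ v : V, ∃ v0 ∈ 𝒜 0, ∃ v1 ∈ 𝒜 1, v = v0 + v1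
  supercomm : ∀ i j, ∀ a ∈ 𝒜 i, ∀ b ∈ 𝒜 j, a * b = superSign i j • (b * a)
  add_left : ∀ a b c, br (a + b) c = br a c + br b c
  add_right : ∀ a b c, br a (b + c) = br a b + br a c
  smul_left : ∀ (r : ℂ) a b, br (r • a) b = r • br a b
  smul_right : ∀ (r : ℂ) a b, br a (r • b) = r • br a b
  sesq_left : ∀ a b, br (D a) b = -(Polynomial.X * br a b)
  sesq_right : ∀ a b, br a (D b) = shiftOp D (br a b)
  skew : ∀ i j, ∀ a ∈ 𝒜 i, ∀ b ∈ 𝒜 j,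
    br b a = -(superSign i j • negShiftEval D (br a b))
  jacobi : ∀ i j, ∀ a ∈ 𝒜 i, ∀ b ∈ 𝒜 j, ∀ c,
    ((br b c).sum fun n x => Polynomial.C (br a x) * Polynomial.X ^ n) =
      superSign i j • ((br a c).sum fun m x => (br b x).sum fun n y =>
        (Polynomial.X : Polynomial (Polynomial V)) ^ n *
          Polynomial.C ((Polynomial.X : Polynomial V) ^ m * Polynomial.C y)) +
      ((br a b).sum fun n x => lamPP ^ n * evalAtPP (br x c) (lamPP + muPP))
  leibniz : ∀ i j, ∀ a ∈ 𝒜 i, ∀ b ∈ 𝒜 j, ∀ c,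
    br a (b * c) = superSign i j • (Polynomial.C b * br a c) + br a b * Polynomial.C c

def gsp (g : Type*) [LieRing g] [LieAlgebra ℂ g] (h : g) (i : ℚ) : Submodule ℂ g :=
  Module.End.eigenspace (LieAlgebra.ad ℂ g h) ((2 * i : ℚ) : ℂ)

def nilp (g : Type*) [LieRing g] [LieAlgebra ℂ g] (h : g) : Submodule ℂ g :=
  ⨆ (i : ℚ) (_ : (1:ℚ)/2 ≤ i), gsp g h i

def mmp (g : Type*) [LieRing g] [LieAlgebra ℂ g] (h : g) : Submodule ℂ g :=
  ⨆ (i : ℚ) (_ : (1:ℚ) ≤ i), gsp g h i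


/-!
STATEMENT 0.  Let
`d = Σ_α φ^{v^α}(u_α + (f,u_α) + Φ_{[u_α]}) + (1/2)Σ_{α,β} φ^{v^α}φ^{v^β}φ_{[u_β,u_α]}`
in `S(R_k^{cp}(g,f))`, where `{u_α}` and `{v^α}` are dual bases of `𝔫` and `𝔫*`.  Then
`{d_λ d} = 0`, and consequently the odd operator `d_{(0)} = {d_λ ·}|_{λ=0}` satisfies
`d_{(0)} ∘ d_{(0)} = 0`; i.e. `d_{(0)}` is a differential on `S(R_k^{cp}(g,f))`.

Modelling: `S(R_k^{cp}(g,f))` is an abstract Poisson vertex superalgebra `V` (ℤ/2ℤ-graded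
by `𝒜`) generated by `g` (even), odd copies `φ_𝔫`, `φ^{𝔫*}` of `𝔫`, `𝔫*`, and the even
neutral fermions `Φ_{𝔫/𝔪}`, with the λ-brackets of `Cur_k^{cp}(g) ⊕ F_ch ⊕ F_ne` on the
generators; dual bases are encoded by a basis `bas` of `𝔫` with `v^α(a) = bas.repr a α`.
-/

/-! All brackets between the generators entering `d` are constants: the `λ`-term `k (a, b)`
vanishes because `𝔫` is isotropic, `c (p, [a, b])` because `p` centralises `𝔫`, and
`Φ_{[a,b]}` because `[𝔫, 𝔫] ⊆ 𝔪`. Hence `J_x = x + (f, x) + Φ_x` is a Lie algebra map from `𝔫`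
commuting with the charged fermions, `d` is its Chevalley–Eilenberg charge
`Σ φ^{v^α} J_{u_α} + ½ Σ φ^{v^α} φ^{v^β} φ_{[u_β, u_α]}`, and `{d_λ d}` is computed with the
Leibniz rule alone: the bracket of the first summand with itself cancels against the two cross
terms, and the bracket of the cubic summand with itself is a sum of cyclic terms of the Jacobi
identity of `𝔫`. Since `d` is odd, `d₍₀₎² = 0` then follows from the Jacobi identity of `V`. -/

@[simp] lemma superSign_zero_left (j : ZMod 2) : superSign 0 j = 1 := by revert j; decide

@[simp] lemma superSign_zero_right (i : ZMod 2) : superSign i 0 = 1 := by revert i; decide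

@[simp] lemma superSign_one_one : superSign 1 1 = -1 := rfl

lemma negShiftEval_C {V : Type*} [Ring V] (D : V → V) (v : V) :
    negShiftEval D (C v) = C v := by
  simp [negShiftEval]

lemma coeff_zero_sum_C_mul_X_pow {V R : Type*} [Semiring V] [Semiring R] (p : V[X]) (F : V → R)
    (hF : F 0 = 0) : (p.sum fun n x => C (F x) * X ^ n).coeff 0 = F (p.coeff 0) := by
  classical
  rw [coeff_sum, Polynomial.sum_def]
  simp only [coeff_C_mul_X_pow, Finset.sum_ite_eq]
  split_ifs with h0
  · rfl
  · rw [notMem_support_iff.mp h0, hF]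

lemma coeff_zero_sum_X_pow_mul_C {V R : Type*} [Semiring V] [Semiring R] (p : V[X]) (F : V → R)
    (hF : F 0 = 0) : (p.sum fun n x => X ^ n * C (F x)).coeff 0 = F (p.coeff 0) := by
  simp only [X_pow_mul]
  exact coeff_zero_sum_C_mul_X_pow p F hF

namespace IsSuperPVA

variable {V : Type*} [Ring V] [Algebra ℂ V] {𝒜 : ZMod 2 → Submodule ℂ V}
  {D : V → V} {br : V → V → V[X]}

variable (H : IsSuperPVA 𝒜 D br)
include H

def bracket : V →ₗ[ℂ] V →ₗ[ℂ] V[X] :=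
  LinearMap.mk₂ ℂ br H.add_left H.smul_left H.add_right H.smul_right

lemma br_zero_right (a : V) : br a 0 = 0 := (H.bracket a).map_zero

lemma br_sum_left {ι : Type*} (s : Finset ι) (F : ι → V) (y : V) :
    br (∑ i ∈ s, F i) y = ∑ i ∈ s, br (F i) y :=
  (LinearMap.congr_fun (map_sum H.bracket F s) y).trans (LinearMap.sum_apply s _ y)

lemma br_sum_right {ι : Type*} (s : Finset ι) (F : ι → V) (y : V) :
    br y (∑ i ∈ s, F i) = ∑ i ∈ s, br y (F i) :=
  map_sum (H.bracket y) F s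

lemma mul_mem' {i j l : ZMod 2} {a b : V} (ha : a ∈ 𝒜 i) (hb : b ∈ 𝒜 j) (hl : i + j = l) :
    a * b ∈ 𝒜 l :=
  hl ▸ H.mul_mem i j a ha b hb

lemma algebraMap_mem (r : ℂ) : algebraMap ℂ V r ∈ 𝒜 0 := by
  rw [Algebra.algebraMap_eq_smul_one]
  exact Submodule.smul_mem _ r H.one_mem

lemma br_swap_eq_zero {i j : ZMod 2} {a b : V} (ha : a ∈ 𝒜 i) (hb : b ∈ 𝒜 j)
    (h : br a b = 0) : br b a = 0 := by
  simp [H.skew i j a ha b hb, h, negShiftEval]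

lemma br_swap_eq_C {i j : ZMod 2} {a b : V} (ha : a ∈ 𝒜 i) (hb : b ∈ 𝒜 j) {v : V}
    (h : br a b = C v) : br b a = C (-(superSign i j • v)) := by
  simp [H.skew i j a ha b hb, h, negShiftEval_C]

lemma br_one_right (a : V) : br a 1 = 0 := by
  obtain ⟨a₀, h₀, a₁, h₁, rfl⟩ := H.total a
  have key : ∀ i, ∀ b ∈ 𝒜 i, br b 1 = 0 := fun i b hb => by
    simpa using H.leibniz i 0 b hb 1 H.one_mem 1
  rw [H.add_left, key 0 a₀ h₀, key 1 a₁ h₁, add_zero]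

lemma br_one_left (a : V) : br 1 a = 0 := by
  obtain ⟨a₀, h₀, a₁, h₁, rfl⟩ := H.total a
  rw [H.add_right, H.br_swap_eq_zero h₀ H.one_mem (H.br_one_right a₀),
    H.br_swap_eq_zero h₁ H.one_mem (H.br_one_right a₁), add_zero]

lemma br_algebraMap_left (r : ℂ) (a : V) : br (algebraMap ℂ V r) a = 0 := by
  rw [Algebra.algebraMap_eq_smul_one, H.smul_left, H.br_one_left, smul_zero]

lemma br_algebraMap_right (r : ℂ) (a : V) : br a (algebraMap ℂ V r) = 0 := by
  rw [Algebra.algebraMap_eq_smul_one, H.smul_right, H.br_one_right, smul_zero]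

lemma br_mul_right_eq_zero {i j : ZMod 2} {a b : V} (ha : a ∈ 𝒜 i) (hb : b ∈ 𝒜 j) (c : V)
    (hab : br a b = 0) (hac : br a c = 0) : br a (b * c) = 0 := by
  simp [H.leibniz i j a ha b hb c, hab, hac]

lemma br_mul_right_eq_C {i j : ZMod 2} {a b : V} (ha : a ∈ 𝒜 i) (hb : b ∈ 𝒜 j) (c : V)
    {u w : V} (hab : br a b = C u) (hac : br a c = C w) :
    br a (b * c) = C (superSign i j • (b * w) + u * c) := by
  rw [H.leibniz i j a ha b hb c, hab, hac, ← C_mul, ← C_mul, smul_C, ← C_add]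

lemma br_mul_left_eq_C {i j l : ZMod 2} {a b c : V} (ha : a ∈ 𝒜 i) (hb : b ∈ 𝒜 j)
    (hc : c ∈ 𝒜 l) {u w : V} (hac : br a c = C u) (hbc : br b c = C w) :
    br (a * b) c = C (a * w + superSign j l • (u * b)) := by
  rw [H.br_swap_eq_C hc (H.mul_mem' ha hb rfl)
    (H.br_mul_right_eq_C hc ha b (H.br_swap_eq_C ha hc hac) (H.br_swap_eq_C hb hc hbc))]
  congr 1
  have hZ : ∀ x : ZMod 2, x = 0 ∨ x = 1 := by decide
  rcases hZ i with rfl | rfl <;> rcases hZ j with rfl | rfl <;> rcases hZ l with rfl | rfl <;>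
    simp [show (1 : ZMod 2) + 1 = 0 from rfl] <;> abel

-- The `λ⁰μ⁰`-coefficient of the Jacobi identity for `a = b = d` reads `x = -x` with
-- `x = d₍₀₎(d₍₀₎ A)`.
lemma zeroth_product_sq_eq_zero {d : V} (hd : d ∈ 𝒜 1)
    (hdd : br d d = 0) (A : V) : (br d ((br d A).coeff 0)).coeff 0 = 0 := by
  have J := congrArg (fun q : V[X][X] => (q.coeff 0).coeff 0) (H.jacobi 1 1 d hd d hd A)
  have hL := coeff_zero_sum_C_mul_X_pow (br d A) (br d) (H.br_zero_right d)
  have hR : ((br d A).sum fun m x => (br d x).sum fun n y =>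
      (X : V[X][X]) ^ n * C ((X : V[X]) ^ m * C y)).coeff 0 =
      (br d A).sum fun m x => X ^ m * C ((br d x).coeff 0) := by
    rw [coeff_sum, Polynomial.sum_def, Polynomial.sum_def]
    exact Finset.sum_congr rfl fun m _ =>
      coeff_zero_sum_X_pow_mul_C _ (fun y => (X : V[X]) ^ m * C y) (by simp)
  simp only [hdd, Polynomial.sum_zero_index, add_zero, superSign_one_one, neg_one_zsmul,
    coeff_neg, hL, hR] at J
  rw [coeff_zero_sum_X_pow_mul_C (br d A) (fun x => (br d x).coeff 0)
    (by simp [H.br_zero_right])] at J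
  have h2 : (2 : ℂ) • (br d ((br d A).coeff 0)).coeff 0 = 0 := by
    rw [two_smul]
    nth_rewrite 1 [J]
    exact neg_add_cancel _
  simpa using h2

end IsSuperPVA

section Grading

variable {g : Type*} [LieRing g] [LieAlgebra ℂ g] (h : g)

lemma mem_gsp {i : ℚ} {x : g} : x ∈ gsp g h i ↔ ⁅h, x⁆ = ((2 * i : ℚ) : ℂ) • x :=
  Module.End.mem_eigenspace_iff

lemma lie_mem_gsp {i j : ℚ} {x y : g} (hx : x ∈ gsp g h i) (hy : y ∈ gsp g h j) :
    ⁅x, y⁆ ∈ gsp g h (i + j) := by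
  rw [mem_gsp] at hx hy ⊢
  rw [leibniz_lie, hx, hy, smul_lie, lie_smul, ← add_smul]
  push_cast
  ring_nf

lemma lie_mem_mmp_of_mem_nilp {x y : g} (hx : x ∈ nilp g h) (hy : y ∈ nilp g h) :
    ⁅x, y⁆ ∈ mmp g h := by
  have hgsp : ∀ i, 1 / 2 ≤ i → ∀ x ∈ gsp g h i, ⁅x, y⁆ ∈ mmp g h := by
    intro i hi x hx
    refine (iSup₂_le fun j hj z hz => ?_ :
      nilp g h ≤ (mmp g h).comap (LieAlgebra.ad ℂ g x)) hy
    exact le_iSup₂ (f := fun i (_ : (1 : ℚ) ≤ i) => gsp g h i) (i + j) (by linarith)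
      (lie_mem_gsp h hx hz)
  have hmem := (iSup₂_le fun i hi z hz => by
    simpa only [Submodule.mem_comap, LinearMap.neg_apply, LieAlgebra.ad_apply, lie_skew]
      using hgsp i hi z hz :
    nilp g h ≤ (mmp g h).comap (-LieAlgebra.ad ℂ g y)) hx
  simpa only [Submodule.mem_comap, LinearMap.neg_apply, LieAlgebra.ad_apply, lie_skew]
    using hmem

-- Invariance under `ad h` gives `B(g(i), g(j)) = 0` unless `i + j = 0`.
lemma B_eq_zero_of_mem_nilp (B : g →ₗ[ℂ] g →ₗ[ℂ] ℂ)
    (hBinv : ∀ a b c : g, B ⁅a, b⁆ c = B a ⁅b, c⁆) {x y : g}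
    (hx : x ∈ nilp g h) (hy : y ∈ nilp g h) : B x y = 0 := by
  have hgsp : ∀ i, 1 / 2 ≤ i → ∀ x ∈ gsp g h i, ∀ j, 1 / 2 ≤ j → ∀ y ∈ gsp g h j,
      B x y = 0 := by
    intro i hi x hx j hj y hy
    rw [mem_gsp] at hx hy
    have hinv := hBinv x h y
    rw [hy, ← lie_skew, hx] at hinv
    have hne : ((2 * i + 2 * j : ℚ) : ℂ) ≠ 0 := by
      rw [Rat.cast_ne_zero]
      linarith
    refine (mul_eq_zero.mp ?_).resolve_left hne
    simp only [map_smul, map_neg, LinearMap.neg_apply, LinearMap.smul_apply, smul_eq_mul] at hinv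
    push_cast at hinv ⊢
    linear_combination -hinv
  have hleft : ∀ i, 1 / 2 ≤ i → ∀ x ∈ gsp g h i, B x y = 0 := fun i hi x hx =>
    (iSup₂_le fun j hj z hz => hgsp i hi x hx j hj z hz :
      nilp g h ≤ LinearMap.ker (B x)) hy
  exact (iSup₂_le fun i hi z hz => hleft i hi z hz :
    nilp g h ≤ LinearMap.ker (B.flip y)) hx

end Grading

section BRST

variable {V : Type*} [Ring V] [Algebra ℂ V] {N : Type*} [LieRing N] [LieAlgebra ℂ N]
  {S : Type*}

-- `ψ α` plays the role of `φ^{v^α}`, where `v^α` is the basis of `𝔫*` dual to `bas`.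
structure IsChargedFermions (𝒜 : ZMod 2 → Submodule ℂ V) (br : V → V → V[X])
    (bas : Module.Basis S ℂ N) (ψ : S → V) (φ : N →ₗ[ℂ] V) : Prop where
  ψ_mem : ∀ α, ψ α ∈ 𝒜 1
  φ_mem : ∀ x, φ x ∈ 𝒜 1
  br_ψ_ψ : ∀ α β, br (ψ α) (ψ β) = 0
  br_φ_φ : ∀ x y, br (φ x) (φ y) = 0
  br_φ_ψ : ∀ x α, br (φ x) (ψ α) = C (algebraMap ℂ V (bas.repr x α))

structure IsCommutingCurrent (𝒜 : ZMod 2 → Submodule ℂ V) (br : V → V → V[X])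
    (ψ : S → V) (φ : N →ₗ[ℂ] V) (E : N →ₗ[ℂ] V) : Prop where
  mem : ∀ x, E x ∈ 𝒜 0
  br_E_E : ∀ x y, br (E x) (E y) = C (E ⁅x, y⁆)
  br_E_ψ : ∀ x α, br (E x) (ψ α) = 0
  br_E_φ : ∀ x y, br (E x) (φ y) = 0

namespace IsChargedFermions

variable {𝒜 : ZMod 2 → Submodule ℂ V} {D : V → V} {br : V → V → V[X]}
  {bas : Module.Basis S ℂ N} {ψ : S → V} {φ : N →ₗ[ℂ] V}
  (H : IsSuperPVA 𝒜 D br) (hF : IsChargedFermions 𝒜 br bas ψ φ)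
include H hF

lemma ψ_mul_ψ (α β : S) : ψ α * ψ β = -(ψ β * ψ α) := by
  simpa using H.supercomm 1 1 _ (hF.ψ_mem α) _ (hF.ψ_mem β)

lemma ψ_mul_ψ_mul_ψ (a b c : S) : ψ a * ψ b * ψ c = ψ c * ψ a * ψ b := by
  rw [mul_assoc, hF.ψ_mul_ψ H b c, mul_neg, ← mul_assoc, hF.ψ_mul_ψ H a c, neg_mul, neg_neg]

lemma ψ_mul_ψ_mem (α β : S) : ψ α * ψ β ∈ 𝒜 0 :=
  H.mul_mem' (hF.ψ_mem α) (hF.ψ_mem β) rfl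

lemma ψ_mul_ψ_mul_φ_mem (α β : S) (x : N) : ψ α * ψ β * φ x ∈ 𝒜 1 :=
  H.mul_mem' (hF.ψ_mul_ψ_mem H α β) (hF.φ_mem x) rfl

lemma br_ψ_φ (α : S) (x : N) : br (ψ α) (φ x) = C (algebraMap ℂ V (bas.repr x α)) := by
  simpa using H.br_swap_eq_C (hF.φ_mem x) (hF.ψ_mem α) (hF.br_φ_ψ x α)

lemma br_ψ_ψψφ (ε α β : S) (x : N) :
    br (ψ ε) (ψ α * ψ β * φ x) = C (bas.repr x ε • (ψ α * ψ β)) := by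
  have hψψ : br (ψ ε) (ψ α * ψ β) = C 0 := by
    rw [H.br_mul_right_eq_zero (hF.ψ_mem ε) (hF.ψ_mem α) _ (hF.br_ψ_ψ ε α) (hF.br_ψ_ψ ε β),
      C_0]
  rw [H.br_mul_right_eq_C (hF.ψ_mem ε) (hF.ψ_mul_ψ_mem H α β) _ hψψ
    (hF.br_ψ_φ H ε x)]
  simp [Algebra.smul_def, Algebra.commutes]

lemma br_φ_ψψφ (x : N) (γ δ : S) (y : N) :
    br (φ x) (ψ γ * ψ δ * φ y) = C ((bas.repr x γ • ψ δ - bas.repr x δ • ψ γ) * φ y) := by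
  have hψψ := H.br_mul_right_eq_C (hF.φ_mem x) (hF.ψ_mem γ) (ψ δ) (hF.br_φ_ψ x γ)
    (hF.br_φ_ψ x δ)
  rw [H.br_mul_right_eq_C (hF.φ_mem x) (hF.ψ_mul_ψ_mem H γ δ) _ hψψ
    ((hF.br_φ_φ x y).trans C_0.symm)]
  simp [Algebra.smul_def, Algebra.commutes, sub_eq_neg_add]

lemma br_ψψφ_ψψφ (α β : S) (x : N) (γ δ : S) (y : N) :
    br (ψ α * ψ β * φ x) (ψ γ * ψ δ * φ y) =
      C (bas.repr x γ • (ψ α * ψ β * ψ δ * φ y) - bas.repr x δ • (ψ α * ψ β * ψ γ * φ y) -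
        bas.repr y β • (ψ α * ψ γ * ψ δ * φ x) + bas.repr y α • (ψ γ * ψ δ * ψ β * φ x)) := by
  have hψψ := H.br_mul_left_eq_C (hF.ψ_mem α) (hF.ψ_mem β) (hF.ψ_mul_ψ_mul_φ_mem H γ δ y)
    (hF.br_ψ_ψψφ H α γ δ y) (hF.br_ψ_ψψφ H β γ δ y)
  rw [H.br_mul_left_eq_C (hF.ψ_mul_ψ_mem H α β) (hF.φ_mem x)
    (hF.ψ_mul_ψ_mul_φ_mem H γ δ y) hψψ (hF.br_φ_ψψφ H x γ δ y)]
  simp only [superSign_one_one, neg_one_zsmul, mul_sub, sub_mul, add_mul, neg_mul, mul_assoc,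
    mul_smul_comm, smul_mul_assoc]
  congr 1
  abel

end IsChargedFermions

namespace IsCommutingCurrent

variable {𝒜 : ZMod 2 → Submodule ℂ V} {D : V → V} {br : V → V → V[X]}
  {bas : Module.Basis S ℂ N} {ψ : S → V} {φ E : N →ₗ[ℂ] V}
  (H : IsSuperPVA 𝒜 D br) (hF : IsChargedFermions 𝒜 br bas ψ φ)
  (hE : IsCommutingCurrent 𝒜 br ψ φ E)
include H hF hE

lemma ψ_mul_E_mem (α : S) (x : N) : ψ α * E x ∈ 𝒜 1 :=
  H.mul_mem' (hF.ψ_mem α) (hE.mem x) rfl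

lemma br_ψ_E (α : S) (x : N) : br (ψ α) (E x) = 0 :=
  H.br_swap_eq_zero (hE.mem x) (hF.ψ_mem α) (hE.br_E_ψ x α)

lemma br_E_ψψφ (x : N) (α β : S) (y : N) : br (E x) (ψ α * ψ β * φ y) = 0 :=
  H.br_mul_right_eq_zero (hE.mem x) (hF.ψ_mul_ψ_mem H α β) _
    (H.br_mul_right_eq_zero (hE.mem x) (hF.ψ_mem α) _ (hE.br_E_ψ x α) (hE.br_E_ψ x β))
    (hE.br_E_φ x y)

lemma br_ψE_ψE (α β : S) (x y : N) :
    br (ψ α * E x) (ψ β * E y) = C (ψ α * ψ β * E ⁅x, y⁆) := by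
  have hE_ψE := H.br_mul_right_eq_C (hE.mem x) (hF.ψ_mem β) (E y)
    ((hE.br_E_ψ x β).trans C_0.symm) (hE.br_E_E x y)
  have hψ_ψE : br (ψ α) (ψ β * E y) = C 0 := by
    rw [H.br_mul_right_eq_zero (hF.ψ_mem α) (hF.ψ_mem β) _ (hF.br_ψ_ψ α β)
      (hE.br_ψ_E H hF α y), C_0]
  rw [H.br_mul_left_eq_C (hF.ψ_mem α) (hE.mem x) (hE.ψ_mul_E_mem H hF β y) hψ_ψE hE_ψE]
  simp [mul_assoc]

lemma br_ψE_ψψφ (γ : S) (x : N) (α β : S) (y : N) :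
    br (ψ γ * E x) (ψ α * ψ β * φ y) = C (bas.repr y γ • (ψ α * ψ β * E x)) := by
  rw [H.br_mul_left_eq_C (hF.ψ_mem γ) (hE.mem x) (hF.ψ_mul_ψ_mul_φ_mem H α β y)
    (hF.br_ψ_ψψφ H γ α β y) ((hE.br_E_ψψφ H hF x α β y).trans C_0.symm)]
  simp

end IsCommutingCurrent

variable [Fintype S]

def currentTerm (bas : Module.Basis S ℂ N) (ψ : S → V) (E : N →ₗ[ℂ] V) : V :=
  ∑ α, ψ α * E (bas α)

def ghostTerm (bas : Module.Basis S ℂ N) (ψ : S → V) (φ : N →ₗ[ℂ] V) : V :=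
  ∑ α, ∑ β, ψ α * ψ β * φ ⁅bas β, bas α⁆

def brstCharge (bas : Module.Basis S ℂ N) (ψ : S → V) (φ E : N →ₗ[ℂ] V) : V :=
  currentTerm bas ψ E + (2 : ℂ)⁻¹ • ghostTerm bas ψ φ

section Contraction

variable (bas : Module.Basis S ℂ N) (z : V) (x : N)

lemma sum_repr_smul_mul (L : N →ₗ[ℂ] V) :
    ∑ γ, bas.repr x γ • (z * L (bas γ)) = z * L x := by
  simp_rw [← mul_smul_comm, ← Finset.mul_sum, ← map_smul, ← map_sum, bas.sum_repr]

lemma sum_repr_smul_mul_lie_left (φ : N →ₗ[ℂ] V) (y : N) :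
    ∑ γ, bas.repr x γ • (z * φ ⁅y, bas γ⁆) = z * φ ⁅y, x⁆ := by
  simp_rw [← mul_smul_comm, ← Finset.mul_sum, ← map_smul, ← lie_smul, ← map_sum, ← lie_sum,
    bas.sum_repr]

lemma sum_repr_smul_mul_lie_right (φ : N →ₗ[ℂ] V) (y : N) :
    ∑ γ, bas.repr x γ • (z * φ ⁅bas γ, y⁆) = z * φ ⁅x, y⁆ := by
  simp_rw [← mul_smul_comm, ← Finset.mul_sum, ← map_smul, ← smul_lie, ← map_sum, ← sum_lie,
    bas.sum_repr]

end Contraction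

namespace IsChargedFermions

variable {𝒜 : ZMod 2 → Submodule ℂ V} {D : V → V} {br : V → V → V[X]}
  {bas : Module.Basis S ℂ N} {ψ : S → V} {φ : N →ₗ[ℂ] V}
  (H : IsSuperPVA 𝒜 D br) (hF : IsChargedFermions 𝒜 br bas ψ φ)
include H hF

lemma sum_ψ_mul_ψ_mul_ψ_mul_rotate (F : S → S → S → V) :
    ∑ a, ∑ b, ∑ c, ψ a * ψ b * ψ c * F a b c = ∑ a, ∑ b, ∑ c, ψ a * ψ b * ψ c * F b c a := by
  calc ∑ a, ∑ b, ∑ c, ψ a * ψ b * ψ c * F a b c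
      = ∑ a, ∑ b, ∑ c, ψ b * ψ c * ψ a * F b c a :=
        (Finset.sum_congr rfl fun _ _ => Finset.sum_comm).trans Finset.sum_comm
    _ = ∑ a, ∑ b, ∑ c, ψ a * ψ b * ψ c * F b c a := by
        refine Finset.sum_congr rfl fun a _ => Finset.sum_congr rfl fun b _ =>
          Finset.sum_congr rfl fun c _ => ?_
        rw [hF.ψ_mul_ψ_mul_ψ H b c a]

-- Cyclic relabelling fixes `ψ a ψ b ψ c`, so the three cyclic terms of the Jacobi identity
-- contribute equally.
lemma sum_ψ_mul_ψ_mul_ψ_mul_lie_lie :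
    ∑ a, ∑ b, ∑ c, ψ a * ψ b * ψ c * φ ⁅bas c, ⁅bas b, bas a⁆⁆ = 0 := by
  set F : S → S → S → V := fun a b c => φ ⁅bas c, ⁅bas b, bas a⁆⁆
  have h₁ := hF.sum_ψ_mul_ψ_mul_ψ_mul_rotate H F
  have h₂ := hF.sum_ψ_mul_ψ_mul_ψ_mul_rotate H fun a b c => F b c a
  have hjac : ∑ a, ∑ b, ∑ c, ψ a * ψ b * ψ c * F a b c + ∑ a, ∑ b, ∑ c, ψ a * ψ b * ψ c * F c a b
      + ∑ a, ∑ b, ∑ c, ψ a * ψ b * ψ c * F b c a = 0 := by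
    simp only [← Finset.sum_add_distrib, ← mul_add, ← map_add, F, lie_jacobi, map_zero, mul_zero,
      Finset.sum_const_zero]
  rw [← h₂, ← h₁] at hjac
  have h3 : (3 : ℂ) • ∑ a, ∑ b, ∑ c, ψ a * ψ b * ψ c * F a b c = 0 := by
    rw [← hjac]; module
  simpa using h3

lemma sum_ψ_mul_ψ_mul_ψ_mul_lie_lie' :
    ∑ a, ∑ b, ∑ c, ψ a * ψ b * ψ c * φ ⁅bas a, ⁅bas c, bas b⁆⁆ = 0 := by
  rw [← hF.sum_ψ_mul_ψ_mul_ψ_mul_rotate H fun a b c => φ ⁅bas c, ⁅bas b, bas a⁆⁆]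
  exact hF.sum_ψ_mul_ψ_mul_ψ_mul_lie_lie H

lemma ghostTerm_mem : ghostTerm bas ψ φ ∈ 𝒜 1 :=
  Submodule.sum_mem _ fun α _ => Submodule.sum_mem _ fun β _ => hF.ψ_mul_ψ_mul_φ_mem H α β _

-- Each of the four contractions leaves a cyclic term of the Jacobi identity.
lemma br_ghostTerm_self : br (ghostTerm bas ψ φ) (ghostTerm bas ψ φ) = 0 := by
  have hT := hF.sum_ψ_mul_ψ_mul_ψ_mul_lie_lie H
  have hT' := hF.sum_ψ_mul_ψ_mul_ψ_mul_lie_lie' H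
  have h₁ : ∑ α, ∑ β, ∑ γ, ∑ δ,
      bas.repr ⁅bas β, bas α⁆ γ • (ψ α * ψ β * ψ δ * φ ⁅bas δ, bas γ⁆) = 0 := by
    rw [← hT]
    refine Finset.sum_congr rfl fun α _ => Finset.sum_congr rfl fun β _ => ?_
    rw [Finset.sum_comm]
    exact Finset.sum_congr rfl fun δ _ => sum_repr_smul_mul_lie_left ..
  have h₂ : ∑ α, ∑ β, ∑ γ, ∑ δ,
      bas.repr ⁅bas β, bas α⁆ δ • (ψ α * ψ β * ψ γ * φ ⁅bas δ, bas γ⁆) = 0 := by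
    rw [← neg_zero, ← hT]
    simp only [← Finset.sum_neg_distrib]
    refine Finset.sum_congr rfl fun α _ => Finset.sum_congr rfl fun β _ =>
      Finset.sum_congr rfl fun γ _ => ?_
    rw [sum_repr_smul_mul_lie_right, ← lie_skew, map_neg, mul_neg]
  have h₃ : ∑ α, ∑ β, ∑ γ, ∑ δ,
      bas.repr ⁅bas δ, bas γ⁆ β • (ψ α * ψ γ * ψ δ * φ ⁅bas β, bas α⁆) = 0 := by
    rw [← neg_zero, ← hT']
    simp only [← Finset.sum_neg_distrib]
    refine Finset.sum_congr rfl fun α _ => ?_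
    rw [Finset.sum_comm, Finset.sum_congr rfl fun _ _ => Finset.sum_comm]
    refine Finset.sum_congr rfl fun γ _ => Finset.sum_congr rfl fun δ _ => ?_
    rw [sum_repr_smul_mul_lie_right, ← lie_skew, map_neg, mul_neg]
  have h₄ : ∑ α, ∑ β, ∑ γ, ∑ δ,
      bas.repr ⁅bas δ, bas γ⁆ α • (ψ γ * ψ δ * ψ β * φ ⁅bas β, bas α⁆) = 0 := by
    rw [← hT', Finset.sum_comm]
    refine Finset.sum_congr rfl fun β _ => ?_
    rw [Finset.sum_comm, Finset.sum_congr rfl fun _ _ => Finset.sum_comm]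
    refine Finset.sum_congr rfl fun γ _ => Finset.sum_congr rfl fun δ _ => ?_
    rw [sum_repr_smul_mul_lie_left, hF.ψ_mul_ψ_mul_ψ H]
  simp only [ghostTerm, H.br_sum_left, H.br_sum_right, hF.br_ψψφ_ψψφ H, ← map_sum,
    Finset.sum_add_distrib, Finset.sum_sub_distrib, h₁, h₂, h₃, h₄, sub_zero, add_zero, C_0]

end IsChargedFermions

namespace IsCommutingCurrent

variable {𝒜 : ZMod 2 → Submodule ℂ V} {D : V → V} {br : V → V → V[X]}
  {bas : Module.Basis S ℂ N} {ψ : S → V} {φ E : N →ₗ[ℂ] V}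
  (H : IsSuperPVA 𝒜 D br) (hF : IsChargedFermions 𝒜 br bas ψ φ)
  (hE : IsCommutingCurrent 𝒜 br ψ φ E)
include H hF hE

lemma br_currentTerm_self : br (currentTerm bas ψ E) (currentTerm bas ψ E) =
    C (∑ α, ∑ β, ψ α * ψ β * E ⁅bas α, bas β⁆) := by
  simp only [currentTerm, H.br_sum_left, H.br_sum_right, hE.br_ψE_ψE H hF, map_sum]

lemma br_currentTerm_ghostTerm : br (currentTerm bas ψ E) (ghostTerm bas ψ φ) =
    C (-∑ α, ∑ β, ψ α * ψ β * E ⁅bas α, bas β⁆) := by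
  simp only [currentTerm, ghostTerm, H.br_sum_left, H.br_sum_right, hE.br_ψE_ψψφ H hF,
    ← map_sum]
  congr 1
  calc ∑ γ, ∑ α, ∑ β, bas.repr ⁅bas β, bas α⁆ γ • (ψ α * ψ β * E (bas γ))
      = ∑ α, ∑ β, ∑ γ, bas.repr ⁅bas β, bas α⁆ γ • (ψ α * ψ β * E (bas γ)) :=
        Finset.sum_comm.trans (Finset.sum_congr rfl fun _ _ => Finset.sum_comm)
    _ = ∑ α, ∑ β, -(ψ α * ψ β * E ⁅bas α, bas β⁆) := by
        simp_rw [sum_repr_smul_mul]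
        refine Finset.sum_congr rfl fun α _ => Finset.sum_congr rfl fun β _ => ?_
        rw [← lie_skew, map_neg, mul_neg]
    _ = -∑ α, ∑ β, ψ α * ψ β * E ⁅bas α, bas β⁆ := by simp only [Finset.sum_neg_distrib]

lemma currentTerm_mem : currentTerm bas ψ E ∈ 𝒜 1 :=
  Submodule.sum_mem _ fun α _ => hE.ψ_mul_E_mem H hF α _

lemma brstCharge_mem : brstCharge bas ψ φ E ∈ 𝒜 1 :=
  Submodule.add_mem _ (hE.currentTerm_mem H hF) (Submodule.smul_mem _ _ (hF.ghostTerm_mem H))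

lemma br_ghostTerm_currentTerm : br (ghostTerm bas ψ φ) (currentTerm bas ψ E) =
    C (-∑ α, ∑ β, ψ α * ψ β * E ⁅bas α, bas β⁆) := by
  simpa using H.br_swap_eq_C (hE.currentTerm_mem H hF) (hF.ghostTerm_mem H)
    (hE.br_currentTerm_ghostTerm H hF)

theorem br_brstCharge_self : br (brstCharge bas ψ φ E) (brstCharge bas ψ φ E) = 0 := by
  simp only [brstCharge, H.add_left, H.add_right, H.smul_left, H.smul_right,
    hE.br_currentTerm_self H hF, hE.br_currentTerm_ghostTerm H hF,
    hE.br_ghostTerm_currentTerm H hF, hF.br_ghostTerm_self H, smul_zero, add_zero, smul_C,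
    ← C_add, C_eq_zero]
  module

end IsCommutingCurrent

end BRST

theorem statement0_general
    -- the simple Lie algebra with sl₂-triple and normalized invariant form
    (g : Type*) [LieRing g] [LieAlgebra ℂ g]
    (h f : g) (B : g →ₗ[ℂ] g →ₗ[ℂ] ℂ)
    (hBinv : ∀ a b c, B ⁅a, b⁆ c = B a ⁅b, c⁆)
    (k c : ℂ) (p : g) (hp_comm : ∀ x ∈ nilp g h, ⁅p, x⁆ = 0)
    -- 𝔫 = ⊕_{i≥1/2} g(i) as a Lie subalgebra
    (N : LieSubalgebra ℂ g) (hN : N.toSubmodule = nilp g h)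
    -- V = S(R_k^{cp}(g,f)): a Poisson vertex superalgebra
    (V : Type*) [Ring V] [Algebra ℂ V]
    (𝒜 : ZMod 2 → Submodule ℂ V) (D : V → V) (br : V → V → Polynomial V)
    (hsuper : IsSuperPVA 𝒜 D br)
    -- dual bases {u_α} of 𝔫 and {v^α} of 𝔫*
    (S : Type*) [Fintype S] (bas : Module.Basis S ℂ N)
    -- the generators: g, φ_𝔫 (odd), φ^{𝔫*} (odd, φup α = φ^{v^α}), Φ_{𝔫/𝔪} (even)
    (emb : g →ₗ[ℂ] V) (φ : N →ₗ[ℂ] V) (φup : S → V) (Φ : N →ₗ[ℂ] V)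
    (hΦm : ∀ x : N, (x : g) ∈ mmp g h → Φ x = 0)
    (hpar_emb : ∀ a, emb a ∈ 𝒜 0) (hpar_φ : ∀ a, φ a ∈ 𝒜 1)
    (hpar_φup : ∀ α, φup α ∈ 𝒜 1) (hpar_Φ : ∀ a, Φ a ∈ 𝒜 0)
    -- λ-brackets between the generators:
    -- {a_λ b} = [a,b] + λk(a,b) + c(p,[a,b])
    (hgg : ∀ a b : g, br (emb a) (emb b) =
      Polynomial.C (emb ⁅a, b⁆ + algebraMap ℂ V (c * B p ⁅a, b⁆)) +
        (k * B a b) • (Polynomial.X : Polynomial V))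
    -- {φ_a λ φ^θ} = θ(a)
    (hφφup : ∀ (a : N) (α : S),
      br (φ a) (φup α) = Polynomial.C (algebraMap ℂ V (bas.repr a α)))
    (hφφ : ∀ a b : N, br (φ a) (φ b) = 0)
    (hφupφup : ∀ α β : S, br (φup α) (φup β) = 0)
    -- {Φ_{[a]} λ Φ_{[b]}} = (f, [a,b])
    (hΦΦ : ∀ a b : N,
      br (Φ a) (Φ b) = Polynomial.C (algebraMap ℂ V (B f ⁅(a : g), (b : g)⁆)))
    -- the three summands of R_k^{cp}(g,f) pairwise commute
    (hgφ : ∀ (a : g) (b : N), br (emb a) (φ b) = 0)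
    (hgφup : ∀ (a : g) (α : S), br (emb a) (φup α) = 0)
    (hgΦ : ∀ (a : g) (b : N), br (emb a) (Φ b) = 0)
    (hφΦ : ∀ (a b : N), br (φ a) (Φ b) = 0)
    (hφupΦ : ∀ (α : S) (b : N), br (φup α) (Φ b) = 0)
    :
    ∀ dd : V,
      dd = (∑ α : S, φup α *
              (emb (bas α) + algebraMap ℂ V (B f (bas α)) + Φ (bas α)))
        + (2:ℂ)⁻¹ • ∑ α : S, ∑ β : S, φup α * φup β * φ ⁅bas β, bas α⁆ →
      -- {d_λ d} = 0, hence d₍₀₎² = 0 : d₍₀₎ is a differential on S(R_k^{cp}(g,f))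
      br dd dd = 0 ∧ (∀ A : V, (br dd ((br dd A).coeff 0)).coeff 0 = 0) := by
  intro dd hdd
  have hnilp (x : N) : (x : g) ∈ nilp g h := hN ▸ x.2
  have hB (x y : N) : B x y = 0 := B_eq_zero_of_mem_nilp h B hBinv (hnilp x) (hnilp y)
  have hBp (x y : N) : B p ⁅(x : g), (y : g)⁆ = 0 := by
    rw [← hBinv, hp_comm _ (hnilp x), map_zero, LinearMap.zero_apply]
  have hΦ_lie (x y : N) : Φ ⁅x, y⁆ = 0 := hΦm _ (lie_mem_mmp_of_mem_nilp h (hnilp x) (hnilp y))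
  let E : N →ₗ[ℂ] V := (emb + Algebra.linearMap ℂ V ∘ₗ B f) ∘ₗ (N.incl : N →ₗ[ℂ] g) + Φ
  have hE (x : N) : E x = emb x + algebraMap ℂ V (B f x) + Φ x := rfl
  have hF : IsChargedFermions 𝒜 br bas φup φ := ⟨hpar_φup, hpar_φ, hφupφup, hφφ, hφφup⟩
  have hcur : IsCommutingCurrent 𝒜 br φup φ E := by
    refine ⟨fun x => ?_, fun x y => ?_, fun x α => ?_, fun x y => ?_⟩
    · exact add_mem (add_mem (hpar_emb x) (hsuper.algebraMap_mem _)) (hpar_Φ x)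
    · have hΦ_emb := hsuper.br_swap_eq_zero (hpar_emb y) (hpar_Φ x) (hgΦ y x)
      simp [hE, hsuper.add_left, hsuper.add_right, hsuper.br_algebraMap_left,
        hsuper.br_algebraMap_right, hgg, hgΦ, hΦ_emb, hΦΦ, hB, hBp, hΦ_lie]
    · simp [hE, hsuper.add_left, hsuper.br_algebraMap_left, hgφup,
        hsuper.br_swap_eq_zero (hpar_φup α) (hpar_Φ x) (hφupΦ α x)]
    · simp [hE, hsuper.add_left, hsuper.br_algebraMap_left, hgφ,
        hsuper.br_swap_eq_zero (hpar_φ y) (hpar_Φ x) (hφΦ y x)]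
  replace hdd : dd = brstCharge bas φup φ E := hdd
  subst hdd
  exact ⟨hcur.br_brstCharge_self hsuper hF, hsuper.zeroth_product_sq_eq_zero
    (hcur.brstCharge_mem hsuper hF) (hcur.br_brstCharge_self hsuper hF)⟩

theorem statement0
    -- the simple Lie algebra with sl₂-triple and normalized invariant form
    (g : Type*) [LieRing g] [LieAlgebra ℂ g] [FiniteDimensional ℂ g] [LieAlgebra.IsSimple ℂ g]
    (e h f : g) (B : g →ₗ[ℂ] g →ₗ[ℂ] ℂ)
    (hhe : ⁅h, e⁆ = (2:ℂ) • e) (hhf : ⁅h, f⁆ = (-2:ℂ) • f) (hef : ⁅e, f⁆ = h)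
    (hBsymm : ∀ a b, B a b = B b a) (hBinv : ∀ a b c, B ⁅a, b⁆ c = B a ⁅b, c⁆)
    (hBef : B e f = 1) (hBhh : B h h = 2)
    (k c : ℂ) (p : g) (hp_comm : ∀ x ∈ nilp g h, ⁅p, x⁆ = 0)
    -- 𝔫 = ⊕_{i≥1/2} g(i) as a Lie subalgebra
    (N : LieSubalgebra ℂ g) (hN : N.toSubmodule = nilp g h)
    -- V = S(R_k^{cp}(g,f)): a Poisson vertex superalgebra
    (V : Type*) [Ring V] [Algebra ℂ V]
    (𝒜 : ZMod 2 → Submodule ℂ V) (D : V → V) (br : V → V → Polynomial V)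
    (hsuper : IsSuperPVA 𝒜 D br)
    -- dual bases {u_α} of 𝔫 and {v^α} of 𝔫*
    (S : Type*) [Fintype S] (bas : Module.Basis S ℂ N)
    -- the generators: g, φ_𝔫 (odd), φ^{𝔫*} (odd, φup α = φ^{v^α}), Φ_{𝔫/𝔪} (even)
    (emb : g →ₗ[ℂ] V) (φ : N →ₗ[ℂ] V) (φup : S → V) (Φ : N →ₗ[ℂ] V)
    (hΦm : ∀ x : N, (x : g) ∈ mmp g h → Φ x = 0)
    (hpar_emb : ∀ a, emb a ∈ 𝒜 0) (hpar_φ : ∀ a, φ a ∈ 𝒜 1)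
    (hpar_φup : ∀ α, φup α ∈ 𝒜 1) (hpar_Φ : ∀ a, Φ a ∈ 𝒜 0)
    -- λ-brackets between the generators:
    -- {a_λ b} = [a,b] + λk(a,b) + c(p,[a,b])
    (hgg : ∀ a b : g, br (emb a) (emb b) =
      Polynomial.C (emb ⁅a, b⁆ + algebraMap ℂ V (c * B p ⁅a, b⁆)) +
        (k * B a b) • (Polynomial.X : Polynomial V))
    -- {φ_a λ φ^θ} = θ(a)
    (hφφup : ∀ (a : N) (α : S),
      br (φ a) (φup α) = Polynomial.C (algebraMap ℂ V (bas.repr a α)))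
    (hφupφ : ∀ (α : S) (a : N),
      br (φup α) (φ a) = Polynomial.C (algebraMap ℂ V (bas.repr a α)))
    (hφφ : ∀ a b : N, br (φ a) (φ b) = 0)
    (hφupφup : ∀ α β : S, br (φup α) (φup β) = 0)
    -- {Φ_{[a]} λ Φ_{[b]}} = (f, [a,b])
    (hΦΦ : ∀ a b : N,
      br (Φ a) (Φ b) = Polynomial.C (algebraMap ℂ V (B f ⁅(a : g), (b : g)⁆)))
    -- the three summands of R_k^{cp}(g,f) pairwise commute
    (hgφ : ∀ (a : g) (b : N), br (emb a) (φ b) = 0)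
    (hgφup : ∀ (a : g) (α : S), br (emb a) (φup α) = 0)
    (hgΦ : ∀ (a : g) (b : N), br (emb a) (Φ b) = 0)
    (hφΦ : ∀ (a b : N), br (φ a) (Φ b) = 0)
    (hφupΦ : ∀ (α : S) (b : N), br (φup α) (Φ b) = 0)
    :
    ∀ dd : V,
      dd = (∑ α : S, φup α *
              (emb (bas α) + algebraMap ℂ V (B f (bas α)) + Φ (bas α)))
        + (2:ℂ)⁻¹ • ∑ α : S, ∑ β : S, φup α * φup β * φ ⁅bas β, bas α⁆ →
      -- {d_λ d} = 0, hence d₍₀₎² = 0 : d₍₀₎ is a differential on S(R_k^{cp}(g,f))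
      br dd dd = 0 ∧ (∀ A : V, (br dd ((br dd A).coeff 0)).coeff 0 = 0) :=
  statement0_general g h f B hBinv k c p hp_comm N hN V 𝒜 D br hsuper S bas emb φ φup Φ hΦm hpar_emb
    hpar_φ hpar_φup hpar_Φ hgg hφφup hφφ hφupφup hΦΦ hgφ hgφup hgΦ hφΦ hφupΦ

end Stmt0
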